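/- arXiv:2303.14023 — 3 statements merged into one kernel-verified Lean document; each statement's English description precedes it below -/
import Mathlib

section
/- For real numbers λ₂, λ_N with 0 < λ₂ < λ_N, one has √(1 - 2/(√(2λ_N/λ₂ - 1) + 1)) < √(1 - 2/(λ_N/λ₂ + 1)). That is, the optimal convergence rate with one-tap memory r₁* is strictly smaller than the optimal memoryless rate r₀*. -/
/-! With κ = λ_N/λ₂ > 1, both rates have the form √(1 - 2/(x + 1)), which is strictly increasing
in x ≥ 1, evaluated at x = √(2κ - 1) and at x = κ respectively; and 1 < √(2κ - 1) < κ because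
2κ - 1 < κ² is (κ - 1)² > 0. -/

namespace Real

theorem one_lt_sqrt_two_mul_sub_one {κ : ℝ} (hκ : 1 < κ) : 1 < √(2 * κ - 1) :=
  lt_sqrt_of_sq_lt (by linarith)

theorem sqrt_two_mul_sub_one_lt {κ : ℝ} (hκ : 1 < κ) : √(2 * κ - 1) < κ :=
  (sqrt_lt' (by linarith)).2 (by nlinarith [sq_pos_of_pos (sub_pos.2 hκ)])

theorem sqrt_one_sub_two_div_add_one_lt_of_lt {a b : ℝ} (ha : 1 ≤ a) (hab : a < b) :
    √(1 - 2 / (a + 1)) < √(1 - 2 / (b + 1)) := by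
  have hnonneg : 0 ≤ 1 - 2 / (a + 1) := sub_nonneg.2 ((div_le_one (by linarith)).2 (by linarith))
  have hdiv : 2 / (b + 1) < 2 / (a + 1) :=
    div_lt_div_of_pos_left two_pos (by linarith) (by linarith)
  exact sqrt_lt_sqrt hnonneg (by linarith)

end Real

theorem one_tap_memory_rate_lt_memoryless_rate
    (l2 lN : ℝ) (h0 : 0 < l2) (h : l2 < lN) :
    Real.sqrt (1 - 2 / (Real.sqrt (2 * lN / l2 - 1) + 1)) <
      Real.sqrt (1 - 2 / (lN / l2 + 1)) := by
  have hκ : 1 < lN / l2 := (one_lt_div h0).2 h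
  rw [mul_div_assoc]
  exact Real.sqrt_one_sub_two_div_add_one_lt_of_lt (Real.one_lt_sqrt_two_mul_sub_one hκ).le
    (Real.sqrt_two_mul_sub_one_lt hκ)
end

section
/- Let Φ(λ) be the (M+2)×(M+2) matrix with first row (1, τ, 0, …, 0), second row (-τε₁λ, 1 - τε₂λ + τθ₀, τθ₁, …, τθ_M), and rows 3 through M+2 given by the shift structure (row j+2 has a 1 in column j+1 and zeros elsewhere, for j = 1,…,M, with last row having 1 in column M+1 and 0 in the last column). Then det(zI - Φ(λ)) = z^M [(z-1)(z - 1 + τε₂λ - Σ_{m=0}^M τθ_m z^{-m}) + τ²ε₁λ], i.e. equals z^M(z-1)(z-1+τε₂λ) - (z-1)Σ_{m=0}^M τθ_m z^{M-m} + τ²ε₁λ z^M as polynomials in z. -/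
/-!
Expand `det (z • 1 - Φ)` along the first column, whose only nonzero entries are `z - 1` and
`τ ε₁ λ`. Both complementary minors are lower Hessenberg matrices with `z` on the diagonal,
`-1` below it and an arbitrary first row `a`; expanding such a matrix along its first column
in turn shows that its determinant is the Horner sum `∑ₘ aₘ z ^ (n - m)`.
-/

/-- Closed-loop matrix of a second-order agent with M-tap velocity memory. -/
def PhiM (M : ℕ) (τ ε₁ ε₂ lam : ℝ) (θ : ℕ → ℝ) :
    Matrix (Fin (M + 2)) (Fin (M + 2)) ℝ := fun i j =>
  if (i : ℕ) = 0 then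
    (if (j : ℕ) = 0 then 1 else if (j : ℕ) = 1 then τ else 0)
  else if (i : ℕ) = 1 then
    (if (j : ℕ) = 0 then -(τ * ε₁ * lam)
     else if (j : ℕ) = 1 then 1 - τ * ε₂ * lam + τ * θ 0
     else τ * θ ((j : ℕ) - 1))
  else if (j : ℕ) + 1 = (i : ℕ) then 1 else 0

open Matrix Finset

theorem sum_range_ite_zero_mul_pow {R : Type*} [Semiring R] (n : ℕ) (c z : R) :
    ∑ m ∈ range (n + 1), (if m = 0 then c else 0) * z ^ (n - m) = c * z ^ n := by
  simp

namespace Matrix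

variable {R : Type*} [CommRing R]

theorem det_succ_column_zero_of_eq_zero {n : ℕ} (A : Matrix (Fin (n + 2)) (Fin (n + 2)) R)
    (hA : ∀ i : Fin n, A i.succ.succ 0 = 0) :
    A.det = A 0 0 * (A.submatrix Fin.succ Fin.succ).det
      - A 1 0 * (A.submatrix (Fin.succAbove 1) Fin.succ).det := by
  rw [det_succ_column_zero, Fin.sum_univ_succ, Fin.sum_univ_succ,
    Finset.sum_eq_zero fun i _ => by rw [hA i, mul_zero, zero_mul]]
  simp only [Fin.val_zero, Fin.succ_zero_eq_one, Fin.val_one, Fin.succAbove_zero]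
  ring

def hessenbergCompanion (n : ℕ) (z : R) (a : ℕ → R) : Matrix (Fin (n + 1)) (Fin (n + 1)) R :=
  fun i j =>
    if (i : ℕ) = 0 then a j
    else if (j : ℕ) + 1 = i then -1 else if (j : ℕ) = i then z else 0

theorem hessenbergCompanion_submatrix_succ_succ (n : ℕ) (z : R) (a : ℕ → R) :
    (hessenbergCompanion (n + 1) z a).submatrix Fin.succ Fin.succ
      = hessenbergCompanion n z (fun m => if m = 0 then z else 0) := by
  ext i j
  simp only [submatrix_apply, hessenbergCompanion, Fin.val_succ, Nat.add_one_ne_zero, if_false,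
    Nat.add_right_cancel_iff]
  split_ifs <;> first | rfl | omega

theorem hessenbergCompanion_submatrix_succAbove_one (n : ℕ) (z : R) (a : ℕ → R) :
    (hessenbergCompanion (n + 1) z a).submatrix (Fin.succAbove 1) Fin.succ
      = hessenbergCompanion n z (fun m => a (m + 1)) := by
  ext i j
  cases i using Fin.cases with
  | zero => simp [hessenbergCompanion]
  | succ i =>
    simp only [submatrix_apply, Fin.one_succAbove_succ, hessenbergCompanion, Fin.val_succ]
    split_ifs <;> first | rfl | omega

theorem det_hessenbergCompanion (n : ℕ) (z : R) (a : ℕ → R) :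
    (hessenbergCompanion n z a).det = ∑ m ∈ range (n + 1), a m * z ^ (n - m) := by
  induction n generalizing a with
  | zero => simp [hessenbergCompanion]
  | succ n ih =>
    have h00 : hessenbergCompanion (n + 1) z a 0 0 = a 0 := by simp [hessenbergCompanion]
    have h10 : hessenbergCompanion (n + 1) z a 1 0 = -1 := by simp [hessenbergCompanion]
    rw [det_succ_column_zero_of_eq_zero _ fun i => by simp [hessenbergCompanion], h00, h10,
      hessenbergCompanion_submatrix_succ_succ, hessenbergCompanion_submatrix_succAbove_one,
      ih, ih, sum_range_ite_zero_mul_pow, sum_range_succ' _ (n + 1)]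
    simp only [Nat.add_sub_add_right, Nat.sub_zero, pow_succ']
    ring

end Matrix

section

variable (M : ℕ) (τ ε₁ ε₂ lam : ℝ) (θ : ℕ → ℝ) (z : ℝ)

theorem smul_one_sub_PhiM_apply (i j : Fin (M + 2)) :
    (z • (1 : Matrix (Fin (M + 2)) (Fin (M + 2)) ℝ) - PhiM M τ ε₁ ε₂ lam θ) i j
      = (if (i : ℕ) = j then z else 0) - PhiM M τ ε₁ ε₂ lam θ i j := by
  simp [one_apply, Fin.ext_iff]

theorem smul_one_sub_PhiM_submatrix_succ_succ :
    (z • (1 : Matrix (Fin (M + 2)) (Fin (M + 2)) ℝ) - PhiM M τ ε₁ ε₂ lam θ).submatrix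
        Fin.succ Fin.succ
      = hessenbergCompanion M z
          (fun m => (if m = 0 then z - 1 + τ * ε₂ * lam else 0) - τ * θ m) := by
  ext i j
  simp only [submatrix_apply, smul_one_sub_PhiM_apply, PhiM, hessenbergCompanion,
    Fin.val_succ, Nat.add_one_ne_zero, if_false, Nat.add_right_cancel_iff, Nat.add_sub_cancel]
  split_ifs <;> simp_all; ring

theorem smul_one_sub_PhiM_submatrix_succAbove_one :
    (z • (1 : Matrix (Fin (M + 2)) (Fin (M + 2)) ℝ) - PhiM M τ ε₁ ε₂ lam θ).submatrix
        (Fin.succAbove 1) Fin.succ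
      = hessenbergCompanion M z (fun m => if m = 0 then -τ else 0) := by
  ext i j
  cases i using Fin.cases with
  | zero =>
    simp only [submatrix_apply, Fin.one_succAbove_zero, smul_one_sub_PhiM_apply, PhiM,
      hessenbergCompanion, Fin.val_succ, Fin.val_zero]
    split_ifs <;> simp_all
  | succ i =>
    simp only [submatrix_apply, Fin.one_succAbove_succ, smul_one_sub_PhiM_apply, PhiM,
      hessenbergCompanion, Fin.val_succ, Nat.add_one_ne_zero, if_false, Nat.add_right_cancel_iff]
    split_ifs <;> simp_all

end

theorem charpoly_M_tap (M : ℕ) (τ ε₁ ε₂ lam : ℝ) (θ : ℕ → ℝ) (z : ℝ) :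
    Matrix.det (z • (1 : Matrix (Fin (M + 2)) (Fin (M + 2)) ℝ) - PhiM M τ ε₁ ε₂ lam θ) =
      z ^ M * (z - 1) * (z - 1 + τ * ε₂ * lam)
        - (z - 1) * ∑ m ∈ Finset.range (M + 1), τ * θ m * z ^ (M - m)
        + τ ^ 2 * ε₁ * lam * z ^ M := by
  have h00 : (z • 1 - PhiM M τ ε₁ ε₂ lam θ) 0 0 = z - 1 := by simp [PhiM]
  have h10 : (z • 1 - PhiM M τ ε₁ ε₂ lam θ) 1 0 = τ * ε₁ * lam := by simp [PhiM]
  rw [det_succ_column_zero_of_eq_zero _ fun i => by simp [PhiM], h00, h10,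
    smul_one_sub_PhiM_submatrix_succ_succ, smul_one_sub_PhiM_submatrix_succAbove_one,
    det_hessenbergCompanion, det_hessenbergCompanion]
  simp only [sub_mul, sum_sub_distrib, sum_range_ite_zero_mul_pow]
  ring
end

section
/- Let 0 < λ₂ < λ_N, 0 < r < 1, and consider the quadratic in θ (after scaling by τ): g(θ) = (τ²(r²-1)/λ₂ - τ²(r²+1)/λ_N)θ² + 2τ(1/λ_N - 1/λ₂)(r⁴ - r²)θ + r⁴((r²+1)/λ_N + (r²-1)/λ₂). Then g has a real solution θ with g(θ) ≥ 0 only if (λ₂ - λ_N)r⁴ + 2λ_N r² + λ₂ - λ_N ≥ 0. -/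
/-!
Multiplying the quadratic by `l2 * lN` shows that its leading coefficient is negative, and a
quadratic with negative leading coefficient takes a nonnegative value only if its discriminant
is nonnegative. Up to the positive factor `8 τ² r⁴ / (l2 lN²)`, that discriminant is
`(l2 - lN) r⁴ + 2 lN r² + l2 - lN`.
-/

theorem discrim_nonneg_of_neg_of_quadratic_nonneg {K : Type*} [Field K] [LinearOrder K]
    [IsStrictOrderedRing K] {a b c x : K} (ha : a < 0) (hx : 0 ≤ a * (x * x) + b * x + c) :
    0 ≤ discrim a b c := by
  have hdisc : discrim a b c = (2 * a * x + b) ^ 2 - 4 * a * (a * (x * x) + b * x + c) := by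
    rw [discrim]; ring
  have hprod : 4 * a * (a * (x * x) + b * x + c) ≤ 0 :=
    mul_nonpos_of_nonpos_of_nonneg (by linarith) hx
  rw [hdisc]
  nlinarith [sq_nonneg (2 * a * x + b)]

theorem theta_feasible_implies_discriminant (l2 lN r τ : ℝ)
    (h0 : 0 < l2) (h : l2 < lN) (hr0 : 0 < r) (hr1 : r < 1) (hτ : 0 < τ) :
    (∃ θ : ℝ,
        (τ ^ 2 * (r ^ 2 - 1) / l2 - τ ^ 2 * (r ^ 2 + 1) / lN) * θ ^ 2
          + 2 * τ * (1 / lN - 1 / l2) * (r ^ 4 - r ^ 2) * θ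
          + r ^ 4 * ((r ^ 2 + 1) / lN + (r ^ 2 - 1) / l2) ≥ 0) →
      (l2 - lN) * r ^ 4 + 2 * lN * r ^ 2 + l2 - lN ≥ 0 := by
  rintro ⟨θ, hθ⟩
  have hlN : 0 < lN := h0.trans h
  set a := τ ^ 2 * (r ^ 2 - 1) / l2 - τ ^ 2 * (r ^ 2 + 1) / lN
  set b := 2 * τ * (1 / lN - 1 / l2) * (r ^ 4 - r ^ 2)
  set c := r ^ 4 * ((r ^ 2 + 1) / lN + (r ^ 2 - 1) / l2)
  have ha : a < 0 := by
    have hr2 : r ^ 2 < 1 := pow_lt_one₀ hr0.le hr1 two_ne_zero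
    have h1 : τ ^ 2 * (r ^ 2 - 1) / l2 ≤ 0 :=
      div_nonpos_of_nonpos_of_nonneg (mul_nonpos_of_nonneg_of_nonpos (by positivity)
        (by linarith)) h0.le
    have h2 : 0 < τ ^ 2 * (r ^ 2 + 1) / lN := by positivity
    linarith
  have hdisc : 0 ≤ discrim a b c :=
    discrim_nonneg_of_neg_of_quadratic_nonneg ha (by rw [← sq θ]; exact hθ)
  have hdisc_eq : discrim a b c = 8 * τ ^ 2 * r ^ 4 / (l2 * lN ^ 2)
      * ((l2 - lN) * r ^ 4 + 2 * lN * r ^ 2 + l2 - lN) := by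
    simp only [a, b, c, discrim]
    field_simp
    ring
  rw [hdisc_eq] at hdisc
  exact nonneg_of_mul_nonneg_right hdisc (by positivity)
end
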